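/- Let n, s, r, δ, a be integers with n = 2s - 2r - δ, 0 ≤ a ≤ s - 3r - δ, r ≥ 1, δ ≥ 0, and s - 2r - δ ≥ 1 with s - 2r - δ ≤ n/2. Then C(n, s-3r-δ-a) + C(n, 2s-2r-δ-a) ≤ C(n, s). -/

import Mathlib

/-!
After `k := n - s = s - 2r - δ` and the symmetry `C(n, n - a) = C(n, a)`, the claim becomes
`C(n, k - r - a) + C(n, a) ≤ C(n, k)` with `k ≤ n / 2`. This follows from
`C(n, a) + C(n, b) ≤ C(n, a + b + 1)` whenever `a + b + 1 ≤ n / 2`, proved by induction on `n`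
through Pascal's rule, and the monotonicity of `C(n, ·)` below `n / 2`.
-/

namespace Nat

lemma choose_le_choose_succ {n k : ℕ} (h : 2 * (k + 1) ≤ n + 1) :
    n.choose k ≤ n.choose (k + 1) := by
  refine Nat.le_of_mul_le_mul_right ?_ k.succ_pos
  rw [choose_succ_right_eq]
  exact Nat.mul_le_mul_left _ (by omega)

lemma choose_lt_choose_succ {n k : ℕ} (h : 2 * (k + 1) ≤ n) :
    n.choose k < n.choose (k + 1) := by
  refine Nat.lt_of_mul_lt_mul_right (a := k + 1) ?_
  rw [choose_succ_right_eq]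
  exact Nat.mul_lt_mul_of_pos_left (by omega) (choose_pos (by omega))

lemma choose_le_choose_of_le_of_le_half {n i j : ℕ} (hij : i ≤ j) (hj : 2 * j ≤ n) :
    n.choose i ≤ n.choose j := by
  induction j, hij using Nat.le_induction with
  | base => rfl
  | succ j _ ih => exact (ih (by omega)).trans (choose_le_choose_succ (by omega))

lemma choose_add_choose_le_choose_add_add_one {n a b : ℕ} (h : 2 * (a + b + 1) ≤ n) :
    n.choose a + n.choose b ≤ n.choose (a + b + 1) := by
  induction n generalizing a b with
  | zero => omega
  | succ m ih =>
    match a, b with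
    | 0, b => simpa [add_comm 1] using choose_lt_choose_succ h
    | a + 1, 0 => simpa using choose_lt_choose_succ h
    | a + 1, b + 1 =>
      have hab : m.choose (a + 1) + m.choose b ≤ m.choose (a + b + 2) := by
        simpa only [show a + 1 + b + 1 = a + b + 2 by omega] using
          ih (a := a + 1) (b := b) (by omega)
      have hba : m.choose a + m.choose (b + 1) ≤ m.choose (a + b + 2) := by
        simpa only [show a + (b + 1) + 1 = a + b + 2 by omega] using
          ih (a := a) (b := b + 1) (by omega)
      have hmono : m.choose (a + b + 2) ≤ m.choose (a + b + 2 + 1) :=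
        choose_le_choose_succ (by omega)
      rw [show a + 1 + (b + 1) + 1 = a + b + 2 + 1 by omega]
      simp only [choose_succ_succ']
      omega

end Nat

theorem stmt13_general (n s r δ a : ℕ) (hr : 1 ≤ r)
    (hn : n + 2 * r + δ = 2 * s) (ha : a + 3 * r + δ ≤ s) :
    n.choose (s - 3 * r - δ - a) + n.choose (2 * s - 2 * r - δ - a) ≤ n.choose s := by
  have hs : s ≤ n := by omega
  rw [show 2 * s - 2 * r - δ - a = n - a by omega, Nat.choose_symm (by omega : a ≤ n),
    ← Nat.choose_symm hs]
  calc n.choose (s - 3 * r - δ - a) + n.choose a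
      ≤ n.choose (s - 3 * r - δ - a + a + 1) :=
        Nat.choose_add_choose_le_choose_add_add_one (by omega)
    _ ≤ n.choose (n - s) := Nat.choose_le_choose_of_le_of_le_half (by omega) (by omega)

/-- If `n = 2s - 2r - δ`, `0 ≤ a ≤ s - 3r - δ`, `r ≥ 1`, `δ ≥ 0` and
`1 ≤ s - 2r - δ ≤ n/2`, then `C(n, s-3r-δ-a) + C(n, 2s-2r-δ-a) ≤ C(n, s)`. -/
theorem stmt13 (n s r δ a : ℕ) (hr : 1 ≤ r)
    (hn : n + 2 * r + δ = 2 * s) (ha : a + 3 * r + δ ≤ s)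
    (hk1 : 2 * r + δ + 1 ≤ s) (hk2 : 2 * (s - 2 * r - δ) ≤ n) :
    n.choose (s - 3 * r - δ - a) + n.choose (2 * s - 2 * r - δ - a) ≤ n.choose s :=
  stmt13_general n s r δ a hr hn ha
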